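/- Let K ⊆ V ⊗ k be a characteristic subspace and let v′ ∈ Ṽ be an isotropic vector with ⟨v, v′⟩ ≠ 0. Then there is exactly one characteristic subspace K̃ ⊆ Ṽ ⊗ k such that v ⊗ 1 ∉ K̃, π_v(K̃) = K, and v′ ⊗ 1 ∈ K̃. -/

import Mathlib

/-!
Split off the hyperbolic plane spanned by `v` and `v'`. The section
`x̄ ↦ x - (⟨v', x⟩ / ⟨v', v⟩) v` of `v^⊥ → v^⊥/⟨v⟩` embeds `V` isometrically onto
`v^⊥ ∩ v'^⊥`, and its base change `s` commutes with `φ`. A totally isotropic `K̃ ∋ v' ⊗ 1` is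
`(K̃ ∩ (v ⊗ 1)^⊥) ⊕ ⟨v' ⊗ 1⟩`, and the first summand lies in `(v ⊗ 1)^⊥ ∩ (v' ⊗ 1)^⊥ = s(V ⊗ k)`,
where it is `s(π_v K̃)`. So `K̃ = s(K) ⊕ ⟨v' ⊗ 1⟩` is forced, and this subspace is characteristic
because `v' ⊗ 1` is isotropic, `φ`-fixed and orthogonal to `s(V ⊗ k)`.
-/

open TensorProduct

section Basics

variable (p : ℕ) [Fact p.Prime]
variable (k : Type*) [Field k] [CharP k p] [Algebra (ZMod p) k]

/-- The `p`-th power map on `k` as a `ZMod p`-linear map. -/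
noncomputable def frobL : k →ₗ[ZMod p] k where
  toFun x := x ^ p
  map_add' x y := add_pow_char x y p
  map_smul' c x := by
    simp only [Algebra.smul_def, mul_pow, RingHom.id_apply]
    congr 1
    rw [← map_pow, ZMod.pow_card]

@[simp] lemma frobL_apply (x : k) : frobL p k x = x ^ p := rfl

instance frobSurj [IsAlgClosed k] : RingHomSurjective (frobenius k p) := by
  constructor
  intro y
  obtain ⟨z, hz⟩ := IsAlgClosed.exists_pow_nat_eq y (n := p) (Fact.out (p := p.Prime)).pos
  exact ⟨z, by simpa [frobenius_def] using hz⟩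

variable (V : Type*) [AddCommGroup V] [Module (ZMod p) V]

private lemma rT_smul (c : k) (m : k ⊗[ZMod p] V) :
    LinearMap.rTensor V (frobL p k) (c • m) = c ^ p • LinearMap.rTensor V (frobL p k) m := by
  induction m using TensorProduct.induction_on with
  | zero => simp
  | tmul a x => simp [TensorProduct.smul_tmul', smul_eq_mul, mul_pow]
  | add x y hx hy => simp [smul_add, hx, hy]

/-- The Frobenius-semilinear bijection `φ` of `k ⊗ V` determined by `φ(s ⊗ x) = s^p ⊗ x`. -/
noncomputable def phiT : (k ⊗[ZMod p] V) →ₛₗ[frobenius k p] (k ⊗[ZMod p] V) where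
  toFun := LinearMap.rTensor V (frobL p k)
  map_add' x y := map_add _ x y
  map_smul' c m := by
    show LinearMap.rTensor V (frobL p k) (c • m) = (frobenius k p) c • LinearMap.rTensor V (frobL p k) m
    rw [rT_smul, frobenius_def]

@[simp] lemma phiT_apply (m : k ⊗[ZMod p] V) :
    phiT p k V m = LinearMap.rTensor V (frobL p k) m := rfl

/-- A bilinear form is non-degenerate if its radical is zero. -/
def Nondeg {R M : Type*} [CommSemiring R] [AddCommMonoid M] [Module R M]
    (b : M →ₗ[R] M →ₗ[R] R) : Prop :=
  ∀ x, (∀ y, b x y = 0) → x = 0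

/-- A bilinear form is non-neutral if there is no totally isotropic subspace of half
dimension. -/
def NonNeutral {R M : Type*} [CommRing R] [AddCommGroup M] [Module R M]
    (b : M →ₗ[R] M →ₗ[R] R) : Prop :=
  ¬ ∃ W : Submodule R M, (∀ x ∈ W, ∀ y ∈ W, b x y = 0) ∧
      2 * Module.finrank R ↥W = Module.finrank R M

variable {p k V}

/-- A characteristic subspace of `V ⊗ k`, where `dim V = 2σ₀`: a totally isotropic
`k`-subspace of dimension `σ₀` with `dim (K + φ K) = σ₀ + 1`. -/
def IsCharSub [IsAlgClosed k] (σ₀ : ℕ) (b : LinearMap.BilinForm (ZMod p) V)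
    (K : Submodule k (k ⊗[ZMod p] V)) : Prop :=
  (∀ x ∈ K, ∀ y ∈ K, b.baseChange k x y = 0) ∧
  Module.finrank k ↥K = σ₀ ∧
  Module.finrank k ↥(K ⊔ K.map (phiT p k V)) = σ₀ + 1

/-- `{x ∈ V : x ⊗ 1 ∈ K}` as an `𝔽_p`-subspace of `V`. -/
def KcapV (K : Submodule k (k ⊗[ZMod p] V)) : Submodule (ZMod p) V where
  carrier := {x | (1 : k) ⊗ₜ[ZMod p] x ∈ K}
  add_mem' := by
    intro a b ha hb
    simp only [Set.mem_setOf_eq] at *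
    rw [TensorProduct.tmul_add]
    exact K.add_mem ha hb
  zero_mem' := by
    simp only [Set.mem_setOf_eq, TensorProduct.tmul_zero]
    exact K.zero_mem
  smul_mem' := by
    intro c x hx
    simp only [Set.mem_setOf_eq] at *
    rw [TensorProduct.tmul_smul]
    exact K.smul_of_tower_mem c hx

end Basics

section Quot

variable {p : ℕ} [Fact p.Prime]
variable {Vt : Type*} [AddCommGroup Vt] [Module (ZMod p) Vt]

/-- The orthogonal complement of a vector. -/
def perp (b : LinearMap.BilinForm (ZMod p) Vt) (v : Vt) : Submodule (ZMod p) Vt :=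
  LinearMap.ker (b v)

lemma self_mem_perp {b : LinearMap.BilinForm (ZMod p) Vt} {v : Vt} (hv : b v v = 0) :
    v ∈ perp b v := LinearMap.mem_ker.mpr hv

/-- The line spanned by an isotropic vector `v`, inside `v^⊥`. -/
noncomputable def lineV (b : LinearMap.BilinForm (ZMod p) Vt) (v : Vt) (hv : b v v = 0) :
    Submodule (ZMod p) (perp b v) :=
  Submodule.span (ZMod p) {⟨v, self_mem_perp hv⟩}

lemma lineV_le (b : LinearMap.BilinForm (ZMod p) Vt) (v : Vt) (hv : b v v = 0)
    {P : Submodule (ZMod p) (perp b v)}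
    (h : (⟨v, self_mem_perp hv⟩ : perp b v) ∈ P) : lineV b v hv ≤ P :=
  Submodule.span_le.mpr (Set.singleton_subset_iff.mpr h)

/-- The quotient `v^⊥ / ⟨v⟩`. -/
noncomputable abbrev Vquot (b : LinearMap.BilinForm (ZMod p) Vt) (v : Vt)
    (hv : b v v = 0) := (perp b v) ⧸ (lineV b v hv)

/-- Restriction of the form to `v^⊥`. -/
noncomputable def bRes (b : LinearMap.BilinForm (ZMod p) Vt) (v : Vt) :
    LinearMap.BilinForm (ZMod p) (perp b v) :=
  b.compl₁₂ (perp b v).subtype (perp b v).subtype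

lemma bRes_apply (b : LinearMap.BilinForm (ZMod p) Vt) (v : Vt) (x y : perp b v) :
    bRes b v x y = b x y := by
  simp [bRes]

noncomputable def bQuotAux (b : LinearMap.BilinForm (ZMod p) Vt) (v : Vt)
    (hsymm : ∀ x y, b x y = b y x) (hv : b v v = 0) :
    (perp b v) →ₗ[ZMod p] (Vquot b v hv) →ₗ[ZMod p] (ZMod p) where
  toFun x := Submodule.liftQ (lineV b v hv) (bRes b v x) (lineV_le b v hv (by
    rw [LinearMap.mem_ker, bRes_apply, hsymm]
    exact LinearMap.mem_ker.mp x.2))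
  map_add' x y := by
    apply LinearMap.ext
    intro z
    obtain ⟨w, rfl⟩ := Submodule.Quotient.mk_surjective _ z
    simp only [Submodule.liftQ_apply, LinearMap.add_apply, bRes_apply,
      Submodule.coe_add, map_add]
  map_smul' c x := by
    apply LinearMap.ext
    intro z
    obtain ⟨w, rfl⟩ := Submodule.Quotient.mk_surjective _ z
    simp only [Submodule.liftQ_apply, LinearMap.smul_apply, bRes_apply,
      Submodule.coe_smul, map_smul, RingHom.id_apply, smul_eq_mul]

/-- The symmetric bilinear form induced on `v^⊥/⟨v⟩` by the form of `Ṽ`. -/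
noncomputable def bQuot (b : LinearMap.BilinForm (ZMod p) Vt) (v : Vt)
    (hsymm : ∀ x y, b x y = b y x) (hv : b v v = 0) :
    LinearMap.BilinForm (ZMod p) (Vquot b v hv) :=
  Submodule.liftQ (lineV b v hv) (bQuotAux b v hsymm hv) (lineV_le b v hv (by
    rw [LinearMap.mem_ker]
    apply LinearMap.ext
    intro z
    obtain ⟨w, rfl⟩ := Submodule.Quotient.mk_surjective _ z
    simp only [bQuotAux, LinearMap.coe_mk, AddHom.coe_mk, Submodule.liftQ_apply,
      bRes_apply, LinearMap.zero_apply]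
    exact LinearMap.mem_ker.mp w.2))

variable (k : Type*) [Field k] [CharP k p] [Algebra (ZMod p) k]

/-- The base change to `k` of the inclusion `v^⊥ ⊆ Ṽ`. -/
noncomputable def iotaPerp (b : LinearMap.BilinForm (ZMod p) Vt) (v : Vt) :
    (k ⊗[ZMod p] ↥(perp b v)) →ₗ[k] (k ⊗[ZMod p] Vt) :=
  LinearMap.baseChange k (perp b v).subtype

/-- The base change to `k` of the quotient map `v^⊥ → v^⊥/⟨v⟩`. -/
noncomputable def qMap (b : LinearMap.BilinForm (ZMod p) Vt) (v : Vt) (hv : b v v = 0) :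
    (k ⊗[ZMod p] ↥(perp b v)) →ₗ[k] (k ⊗[ZMod p] (Vquot b v hv)) :=
  LinearMap.baseChange k (lineV b v hv).mkQ

/-- `π_v(K̃)`: the image of `K̃ ∩ (v^⊥ ⊗ k)` under the quotient map
`v^⊥ ⊗ k → (v^⊥/⟨v⟩) ⊗ k`. -/
noncomputable def piV (b : LinearMap.BilinForm (ZMod p) Vt) (v : Vt) (hv : b v v = 0)
    (K : Submodule k (k ⊗[ZMod p] Vt)) : Submodule k (k ⊗[ZMod p] (Vquot b v hv)) :=
  (K.comap (iotaPerp k b v)).map (qMap k b v hv)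

end Quot
section Decomp

variable {p : ℕ} [Fact p.Prime]
variable {k : Type*} [Field k] [CharP k p] [Algebra (ZMod p) k]
variable {V Vt : Type*} [AddCommGroup V] [Module (ZMod p) V]
  [AddCommGroup Vt] [Module (ZMod p) Vt]

/-- The characteristic subspace `K(B)` of `Ṽ ⊗ k` attached to a characteristic subspace
`K ⊆ V ⊗ k` and a vector `B ∈ V ⊗ k`: the span of `{x + ⟨x,B⟩v : x ∈ K}` together with
`w + B + (B²/2)v`. -/
noncomputable def KB (bV : LinearMap.BilinForm (ZMod p) V) (j : V →ₗ[ZMod p] Vt)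
    (v w : Vt) (K : Submodule k (k ⊗[ZMod p] V)) (B : k ⊗[ZMod p] V) :
    Submodule k (k ⊗[ZMod p] Vt) :=
  Submodule.span k
    (((fun x => LinearMap.baseChange k j x + (bV.baseChange k x B) • ((1 : k) ⊗ₜ[ZMod p] v)) '' K) ∪
      {(1 : k) ⊗ₜ[ZMod p] w + LinearMap.baseChange k j B +
        ((bV.baseChange k B B) / 2) • ((1 : k) ⊗ₜ[ZMod p] v)})

/-- `π_v(K̃)` computed using the fixed orthogonal decomposition `Ṽ = V ⊕ ⟨v,w⟩`:
the subspace of those `x ∈ V ⊗ k` admitting a lift `x + c·(v ⊗ 1)` lying in `K̃`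
(equivalently, whose image in `Ṽ ⊗ k` lies in `K̃ + ⟨v ⊗ 1⟩`). -/
noncomputable def projSub (j : V →ₗ[ZMod p] Vt) (v : Vt)
    (Kt : Submodule k (k ⊗[ZMod p] Vt)) : Submodule k (k ⊗[ZMod p] V) :=
  (Kt ⊔ Submodule.span k {(1 : k) ⊗ₜ[ZMod p] v}).comap (LinearMap.baseChange k j)

lemma mem_projSub {j : V →ₗ[ZMod p] Vt} {v : Vt} {Kt : Submodule k (k ⊗[ZMod p] Vt)}
    (x : k ⊗[ZMod p] V) (c : k)
    (h : LinearMap.baseChange k j x + c • ((1 : k) ⊗ₜ[ZMod p] v) ∈ Kt) :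
    x ∈ projSub j v Kt := by
  have : LinearMap.baseChange k j x
      = (LinearMap.baseChange k j x + c • ((1 : k) ⊗ₜ[ZMod p] v))
        + (-c) • ((1 : k) ⊗ₜ[ZMod p] v) := by
    first
      | (rw [add_assoc, ← add_smul, add_neg_cancel, zero_smul, add_zero])
      | module
      | (simp only [neg_smul]; abel)
  rw [projSub, Submodule.mem_comap, this]
  exact Submodule.add_mem _ (Submodule.mem_sup_left h)
    (Submodule.mem_sup_right (Submodule.smul_mem _ _ (Submodule.mem_span_singleton_self _)))

variable [IsAlgClosed k]

/-- The condition `B - φ(B) ∈ K + φ(K)` defining `U(K)` before quotienting. -/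
def UCond (K : Submodule k (k ⊗[ZMod p] V)) (B : k ⊗[ZMod p] V) : Prop :=
  B - phiT p k V B ∈ K ⊔ K.map (phiT p k V)

/-- `{B ∈ V ⊗ k : B - φ(B) ∈ K + φ(K)}` as an additive group. -/
def Ugrp (K : Submodule k (k ⊗[ZMod p] V)) : AddSubgroup (k ⊗[ZMod p] V) where
  carrier := {B | B - phiT p k V B ∈ K ⊔ K.map (phiT p k V)}
  add_mem' := by
    intro a b ha hb
    simp only [Set.mem_setOf_eq] at *
    have e : a + b - phiT p k V (a + b) = (a - phiT p k V a) + (b - phiT p k V b) := by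
      rw [map_add]; abel
    rw [e]; exact Submodule.add_mem _ ha hb
  zero_mem' := by
    simp only [Set.mem_setOf_eq, map_zero, sub_zero]
    exact Submodule.zero_mem _
  neg_mem' := by
    intro a ha
    simp only [Set.mem_setOf_eq] at *
    have e : -a - phiT p k V (-a) = -(a - phiT p k V a) := by
      rw [map_neg]; abel
    rw [e]; exact Submodule.neg_mem _ ha

lemma mem_Ugrp {K : Submodule k (k ⊗[ZMod p] V)} {B : k ⊗[ZMod p] V} :
    B ∈ Ugrp K ↔ B - phiT p k V B ∈ K ⊔ K.map (phiT p k V) := Iff.rfl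

/-- The group `U(K) = {B : B - φ(B) ∈ K + φ(K)}/K`. -/
noncomputable abbrev UK (K : Submodule k (k ⊗[ZMod p] V)) :=
  (↥(Ugrp K)) ⧸ ((K.toAddSubgroup).addSubgroupOf (Ugrp K))

lemma one_tmul_mem_Ugrp (K : Submodule k (k ⊗[ZMod p] V)) (x : V) :
    (1 : k) ⊗ₜ[ZMod p] x ∈ Ugrp K := by
  have h : phiT p k V ((1 : k) ⊗ₜ[ZMod p] x) = (1 : k) ⊗ₜ[ZMod p] x := by
    rw [phiT_apply, LinearMap.rTensor_tmul, frobL_apply, one_pow]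
  rw [mem_Ugrp, h, sub_self]
  exact Submodule.zero_mem _

/-- The natural map `V → U(K)`, `x ↦ (x ⊗ 1) mod K`. -/
noncomputable def toUK (K : Submodule k (k ⊗[ZMod p] V)) : V →+ UK K :=
  (QuotientAddGroup.mk' ((K.toAddSubgroup).addSubgroupOf (Ugrp K))).comp
    (AddMonoidHom.codRestrict
      (((TensorProduct.mk (ZMod p) k V) (1 : k)).toAddMonoidHom) (Ugrp K)
      (fun x => one_tmul_mem_Ugrp K x))

/-- Iterates `φ^i(K)`. -/
noncomputable def phiPow (i : ℕ) (K : Submodule k (k ⊗[ZMod p] V)) :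
    Submodule k (k ⊗[ZMod p] V) :=
  (fun S : Submodule k (k ⊗[ZMod p] V) => S.map (phiT p k V))^[i] K

end Decomp


section BaseChange

variable {R A : Type*} [CommRing R] [CommRing A] [Algebra R A]
variable {M N : Type*} [AddCommGroup M] [Module R M] [AddCommGroup N] [Module R N]

lemma Submodule.eq_top_of_one_tmul_mem {P : Submodule A (A ⊗[R] M)}
    (h : ∀ x, (1 : A) ⊗ₜ[R] x ∈ P) : P = ⊤ := by
  rw [eq_top_iff, ← Submodule.baseChange_top, Submodule.baseChange_eq_span, Submodule.span_le]
  rintro _ ⟨x, -, rfl⟩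
  exact h x

namespace LinearMap.BilinForm

lemma baseChange_compl₁₂ (b : LinearMap.BilinForm R N) (f : M →ₗ[R] N) :
    LinearMap.BilinForm.baseChange A (b.compl₁₂ f f) =
      (b.baseChange A).compl₁₂ (f.baseChange A) (f.baseChange A) := by
  ext x y
  simp

lemma baseChange_one_tmul_one_tmul (b : LinearMap.BilinForm R N) (x y : N) :
    b.baseChange A ((1 : A) ⊗ₜ[R] x) ((1 : A) ⊗ₜ[R] y) = algebraMap R A (b x y) := by
  rw [baseChange_tmul, mul_one, Algebra.algebraMap_eq_smul_one]

lemma baseChange_one_tmul_one_tmul_ne_zero {K L N : Type*} [Field K] [Field L] [Algebra K L]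
    [AddCommGroup N] [Module K N] (b : LinearMap.BilinForm K N) {x y : N} (h : b x y ≠ 0) :
    b.baseChange L ((1 : L) ⊗ₜ[K] x) ((1 : L) ⊗ₜ[K] y) ≠ 0 := by
  rwa [baseChange_one_tmul_one_tmul, map_ne_zero]

lemma baseChange_one_tmul_baseChange_eq_zero (b : LinearMap.BilinForm R N) {x : N} {f : M →ₗ[R] N}
    (h : ∀ m, b x (f m) = 0) (u : A ⊗[R] M) :
    b.baseChange A ((1 : A) ⊗ₜ[R] x) (f.baseChange A u) = 0 := by
  induction u using TensorProduct.induction_on with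
  | zero => simp
  | tmul s m => simp [h m]
  | add a c ha hc => simp only [map_add, ha, hc, add_zero]

end LinearMap.BilinForm

end BaseChange

section Frobenius

variable {p : ℕ} [Fact p.Prime] {k : Type*} [Field k] [CharP k p] [Algebra (ZMod p) k]
variable {M N : Type*} [AddCommGroup M] [Module (ZMod p) M] [AddCommGroup N] [Module (ZMod p) N]

lemma phiT_one_tmul (x : M) : phiT p k M ((1 : k) ⊗ₜ[ZMod p] x) = (1 : k) ⊗ₜ[ZMod p] x := by
  simp

lemma phiT_baseChange (f : M →ₗ[ZMod p] N) (u : k ⊗[ZMod p] M) :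
    phiT p k N (f.baseChange k u) = f.baseChange k (phiT p k M u) := by
  induction u using TensorProduct.induction_on with
  | zero => simp
  | tmul s m => rfl
  | add a c ha hc => simp only [map_add, ha, hc]

lemma map_phiT_map_baseChange [IsAlgClosed k] (f : M →ₗ[ZMod p] N)
    (S : Submodule k (k ⊗[ZMod p] M)) :
    (S.map (f.baseChange k)).map (phiT p k N) = (S.map (phiT p k M)).map (f.baseChange k) := by
  rw [← Submodule.map_comp, ← Submodule.map_comp]
  congr 1
  ext u
  exact phiT_baseChange f u

end Frobenius

section Hyperplane

variable {k X Y : Type*} [Field k] [AddCommGroup X] [Module k X] [AddCommGroup Y] [Module k Y]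

lemma Submodule.inf_ker_sup_span_singleton_eq {S : Submodule k X} {f : X →ₗ[k] k} {x : X}
    (hx : x ∈ S) (hfx : f x ≠ 0) : S ⊓ LinearMap.ker f ⊔ span k {x} = S := by
  refine le_antisymm (sup_le inf_le_left (span_le.mpr (Set.singleton_subset_iff.mpr hx))) ?_
  intro z hz
  have hker : z - (f z / f x) • x ∈ S ⊓ LinearMap.ker f :=
    ⟨S.sub_mem hz (S.smul_mem _ hx), by simp [div_mul_cancel₀ _ hfx]⟩
  rw [← sub_add_cancel z ((f z / f x) • x)]
  exact add_mem (mem_sup_left hker) (mem_sup_right (smul_mem _ _ (mem_span_singleton_self x)))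

lemma Submodule.comap_map_sup_span_singleton_eq {g : Y →ₗ[k] X} (hg : Function.Injective g)
    {f : X →ₗ[k] k} (hgf : ∀ y, f (g y) = 0) {x : X} (hfx : f x ≠ 0) (P : Submodule k Y) :
    (P.map g ⊔ span k {x}).comap g = P := by
  refine le_antisymm ?_ ((le_comap_map g P).trans (comap_mono le_sup_left))
  intro z hz
  obtain ⟨_, ⟨y, hy, rfl⟩, _, hc, hzy⟩ := mem_sup.mp (mem_comap.mp hz)
  obtain ⟨c, rfl⟩ := mem_span_singleton.mp hc
  have hc0 : c = 0 := by
    simpa [hgf, hfx] using congrArg f hzy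
  rw [hc0, zero_smul, add_zero] at hzy
  exact hg hzy ▸ hy

lemma ker_inf_ker_le_of_sup_span_pair_eq_top {P : Submodule k X} {f g : X →ₗ[k] k} {x y : X}
    (htop : P ⊔ Submodule.span k {x, y} = ⊤) (hP : P ≤ LinearMap.ker f ⊓ LinearMap.ker g)
    (hfx : f x = 0) (hgy : g y = 0) (hfy : f y ≠ 0) (hgx : g x ≠ 0) :
    LinearMap.ker f ⊓ LinearMap.ker g ≤ P := by
  rintro z ⟨hfz, hgz⟩
  obtain ⟨n, hn, _, hxy, rfl⟩ := Submodule.mem_sup.mp (htop ▸ Submodule.mem_top (x := z))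
  obtain ⟨a, c, rfl⟩ := Submodule.mem_span_pair.mp hxy
  obtain ⟨hfn, hgn⟩ := hP hn
  rw [SetLike.mem_coe, LinearMap.mem_ker] at hfz hgz
  simp only [map_add, map_smul, smul_eq_mul, hfx, hgy, LinearMap.mem_ker.mp hfn,
    LinearMap.mem_ker.mp hgn] at hfz hgz
  simp_all

lemma finrank_map_sup_span_singleton [Module.Finite k X] {g : Y →ₗ[k] X}
    (hg : Function.Injective g) {x : X} (hx : x ∉ LinearMap.range g) (P : Submodule k Y) :
    Module.finrank k ↥(P.map g ⊔ Submodule.span k {x}) = Module.finrank k P + 1 := by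
  rw [Submodule.finrank_sup_span_singleton fun h => hx (LinearMap.map_le_range h),
    (Submodule.equivMapOfInjective g hg P).finrank_eq]

end Hyperplane

section IsCharSub

variable {p : ℕ} [Fact p.Prime] {k : Type*} [Field k] [IsAlgClosed k] [CharP k p]
  [Algebra (ZMod p) k]
variable {V Vt : Type*} [AddCommGroup V] [Module (ZMod p) V] [AddCommGroup Vt]
  [Module (ZMod p) Vt]

lemma IsCharSub.map_baseChange_sup_span [Module.Finite (ZMod p) Vt] {σ₀ : ℕ}
    {bV : LinearMap.BilinForm (ZMod p) V} {b : LinearMap.BilinForm (ZMod p) Vt}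
    (hsymm : ∀ x y, b x y = b y x) {f : V →ₗ[ZMod p] Vt}
    (hf : Function.Injective (f.baseChange k)) (hfb : b.compl₁₂ f f = bV) {w : Vt}
    (hw : b w w = 0) (hwf : ∀ x, b w (f x) = 0)
    (hwr : (1 : k) ⊗ₜ[ZMod p] w ∉ LinearMap.range (f.baseChange k))
    {K : Submodule k (k ⊗[ZMod p] V)} (hK : IsCharSub σ₀ bV K) :
    IsCharSub (σ₀ + 1) b (K.map (f.baseChange k) ⊔ Submodule.span k {(1 : k) ⊗ₜ[ZMod p] w}) := by
  refine ⟨?_, ?_, ?_⟩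
  · have hff : ∀ x y,
        b.baseChange k (f.baseChange k x) (f.baseChange k y) = bV.baseChange k x y := by
      intro x y
      rw [← hfb, LinearMap.BilinForm.baseChange_compl₁₂]
      rfl
    have hwf' : ∀ x, b.baseChange k ((1 : k) ⊗ₜ[ZMod p] w) (f.baseChange k x) = 0 :=
      LinearMap.BilinForm.baseChange_one_tmul_baseChange_eq_zero b hwf
    have hfw' : ∀ x, b.baseChange k (f.baseChange k x) ((1 : k) ⊗ₜ[ZMod p] w) = 0 := fun x => by
      simpa [hwf'] using
        (LinearMap.BilinForm.IsSymm.baseChange k ⟨hsymm⟩).eq (f.baseChange k x) (1 ⊗ₜ[ZMod p] w)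
    have hww : b.baseChange k ((1 : k) ⊗ₜ[ZMod p] w) ((1 : k) ⊗ₜ[ZMod p] w) = 0 := by
      rw [LinearMap.BilinForm.baseChange_one_tmul_one_tmul, hw, map_zero]
    intro x hx y hy
    obtain ⟨_, ⟨x', hx', rfl⟩, _, hcx, rfl⟩ := Submodule.mem_sup.mp hx
    obtain ⟨_, ⟨y', hy', rfl⟩, _, hcy, rfl⟩ := Submodule.mem_sup.mp hy
    obtain ⟨c, rfl⟩ := Submodule.mem_span_singleton.mp hcx
    obtain ⟨d, rfl⟩ := Submodule.mem_span_singleton.mp hcy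
    simp [hff, hwf', hfw', hww, hK.1 x' hx' y' hy']
  · rw [finrank_map_sup_span_singleton hf hwr, hK.2.1]
  · have hsup : K.map (f.baseChange k) ⊔ Submodule.span k {(1 : k) ⊗ₜ[ZMod p] w} ⊔
          (K.map (f.baseChange k) ⊔ Submodule.span k {(1 : k) ⊗ₜ[ZMod p] w}).map (phiT p k Vt) =
        (K ⊔ K.map (phiT p k V)).map (f.baseChange k) ⊔
          Submodule.span k {(1 : k) ⊗ₜ[ZMod p] w} := by
      rw [Submodule.map_sup, map_phiT_map_baseChange, Submodule.map_span, Set.image_singleton,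
        phiT_one_tmul, sup_sup_sup_comm, sup_idem, Submodule.map_sup]
    rw [hsup, finrank_map_sup_span_singleton hf hwr, hK.2.2]

end IsCharSub

section QuotLift

variable {p : ℕ} [Fact p.Prime] {Vt : Type*} [AddCommGroup Vt] [Module (ZMod p) Vt]
variable (b : LinearMap.BilinForm (ZMod p) Vt) {v : Vt} (hv : b v v = 0)
  (ℓ : Vt →ₗ[ZMod p] ZMod p) (hℓ : ℓ v ≠ 0)

noncomputable def perpLift : Vquot b v hv →ₗ[ZMod p] perp b v :=
  (lineV b v hv).liftQ
    (LinearMap.id - ((ℓ v)⁻¹ • ℓ ∘ₗ (perp b v).subtype).smulRight ⟨v, self_mem_perp hv⟩)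
    (lineV_le b v hv (by simp [inv_mul_cancel₀ hℓ]))

lemma coe_perpLift_mk (y : perp b v) :
    (perpLift b hv ℓ hℓ (Submodule.Quotient.mk y) : Vt) = y - (ℓ y / ℓ v) • v := by
  simp [perpLift, div_eq_inv_mul]

lemma mkQ_comp_perpLift : (lineV b v hv).mkQ ∘ₗ perpLift b hv ℓ hℓ = LinearMap.id := by
  refine Submodule.linearMap_qext _ (LinearMap.ext fun y => ?_)
  simp only [LinearMap.comp_apply, Submodule.mkQ_apply, LinearMap.id_apply]
  rw [Submodule.Quotient.eq]
  refine Submodule.mem_span_singleton.mpr ⟨-(ℓ y / ℓ v), Subtype.ext ?_⟩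
  simp [coe_perpLift_mk]

noncomputable def quotLift : Vquot b v hv →ₗ[ZMod p] Vt :=
  (perp b v).subtype ∘ₗ perpLift b hv ℓ hℓ

lemma quotLift_injective : Function.Injective (quotLift b hv ℓ hℓ) :=
  (perp b v).injective_subtype.comp
    (Function.LeftInverse.injective (g := (lineV b v hv).mkQ)
      (LinearMap.congr_fun (mkQ_comp_perpLift b hv ℓ hℓ)))

lemma apply_quotLift (x : Vquot b v hv) : ℓ (quotLift b hv ℓ hℓ x) = 0 := by
  obtain ⟨y, rfl⟩ := Submodule.Quotient.mk_surjective _ x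
  simp [quotLift, coe_perpLift_mk, div_mul_cancel₀ _ hℓ]

lemma compl₁₂_quotLift (hsymm : ∀ x y, b x y = b y x) :
    b.compl₁₂ (quotLift b hv ℓ hℓ) (quotLift b hv ℓ hℓ) = bQuot b v hsymm hv := by
  refine Submodule.linearMap_qext _ (LinearMap.ext fun y => ?_)
  refine Submodule.linearMap_qext _ (LinearMap.ext fun y' => ?_)
  have hy : b y v = 0 := (hsymm _ _).trans y.2
  have hy' : b v y' = 0 := y'.2
  simp [quotLift, coe_perpLift_mk, bQuot, bQuotAux, bRes, hv, hy, hy']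

lemma range_quotLift_sup_span_eq_top {w : Vt} (hw : b v w ≠ 0) :
    LinearMap.range (quotLift b hv ℓ hℓ) ⊔ Submodule.span (ZMod p) {v, w} = ⊤ := by
  refine eq_top_iff.mpr fun x _ => ?_
  have hy : x - (b v x / b v w) • w ∈ perp b v := by
    simp [perp, div_mul_cancel₀ _ hw]
  set y : perp b v := ⟨_, hy⟩
  have hx : x = quotLift b hv ℓ hℓ (Submodule.Quotient.mk y) +
      ((ℓ y / ℓ v) • v + (b v x / b v w) • w) := by
    simp only [quotLift, LinearMap.comp_apply, Submodule.subtype_apply, coe_perpLift_mk, y]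
    abel
  rw [hx]
  exact Submodule.add_mem_sup (LinearMap.mem_range_self _ _)
    (Submodule.mem_span_pair.mpr ⟨_, _, rfl⟩)

end QuotLift

section BaseChangeQuotLift

variable {p : ℕ} [Fact p.Prime] (k : Type*) [Field k] [Algebra (ZMod p) k]
variable {Vt : Type*} [AddCommGroup Vt] [Module (ZMod p) Vt]
variable {b : LinearMap.BilinForm (ZMod p) Vt} {v v' : Vt}

lemma iotaPerp_comp_baseChange_perpLift (hv : b v v = 0) (ℓ : Vt →ₗ[ZMod p] ZMod p)
    (hℓ : ℓ v ≠ 0) :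
    iotaPerp k b v ∘ₗ (perpLift b hv ℓ hℓ).baseChange k = (quotLift b hv ℓ hℓ).baseChange k := by
  rw [iotaPerp, ← LinearMap.baseChange_comp]
  rfl

lemma qMap_comp_baseChange_perpLift (hv : b v v = 0) (ℓ : Vt →ₗ[ZMod p] ZMod p)
    (hℓ : ℓ v ≠ 0) :
    qMap k b v hv ∘ₗ (perpLift b hv ℓ hℓ).baseChange k = LinearMap.id := by
  rw [qMap, ← LinearMap.baseChange_comp, mkQ_comp_perpLift, LinearMap.baseChange_id]

lemma range_baseChange_quotLift_sup_span_eq_top (hsymm : ∀ x y, b x y = b y x)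
    (hv : b v v = 0) (hv'v : b v' v ≠ 0) :
    LinearMap.range ((quotLift b hv (b v') hv'v).baseChange k) ⊔
      Submodule.span k {(1 : k) ⊗ₜ[ZMod p] v, (1 : k) ⊗ₜ[ZMod p] v'} = ⊤ := by
  refine Submodule.eq_top_of_one_tmul_mem fun x => ?_
  have hx := range_quotLift_sup_span_eq_top b hv (b v') hv'v (hsymm v' v ▸ hv'v) ▸
    Submodule.mem_top (x := x)
  obtain ⟨_, ⟨y, rfl⟩, _, hm, rfl⟩ := Submodule.mem_sup.mp hx
  obtain ⟨a, c, rfl⟩ := Submodule.mem_span_pair.mp hm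
  rw [tmul_add, tmul_add, tmul_smul, tmul_smul]
  exact Submodule.add_mem_sup ⟨1 ⊗ₜ y, rfl⟩ (Submodule.mem_span_pair.mpr
    ⟨algebraMap (ZMod p) k a, algebraMap (ZMod p) k c, by simp only [algebraMap_smul]⟩)

lemma range_baseChange_quotLift_le (hv : b v v = 0) (hv'v : b v' v ≠ 0) :
    LinearMap.range ((quotLift b hv (b v') hv'v).baseChange k) ≤
      LinearMap.ker (b.baseChange k ((1 : k) ⊗ₜ[ZMod p] v)) ⊓
        LinearMap.ker (b.baseChange k ((1 : k) ⊗ₜ[ZMod p] v')) := by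
  rintro _ ⟨u, rfl⟩
  exact ⟨LinearMap.BilinForm.baseChange_one_tmul_baseChange_eq_zero b
      (f := quotLift b hv (b v') hv'v) (fun m => LinearMap.mem_ker.mp (perpLift b hv _ hv'v m).2) u,
    LinearMap.BilinForm.baseChange_one_tmul_baseChange_eq_zero b (apply_quotLift b hv _ hv'v) u⟩

lemma ker_inf_ker_le_range_baseChange_quotLift (hsymm : ∀ x y, b x y = b y x)
    (hv : b v v = 0) (hv' : b v' v' = 0) (hv'v : b v' v ≠ 0) :
    LinearMap.ker (b.baseChange k ((1 : k) ⊗ₜ[ZMod p] v)) ⊓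
        LinearMap.ker (b.baseChange k ((1 : k) ⊗ₜ[ZMod p] v')) ≤
      LinearMap.range ((quotLift b hv (b v') hv'v).baseChange k) := by
  refine ker_inf_ker_le_of_sup_span_pair_eq_top
    (range_baseChange_quotLift_sup_span_eq_top k hsymm hv hv'v)
    (range_baseChange_quotLift_le k hv hv'v) ?_ ?_
    (b.baseChange_one_tmul_one_tmul_ne_zero (hsymm v' v ▸ hv'v))
    (b.baseChange_one_tmul_one_tmul_ne_zero hv'v)
  all_goals simp only [LinearMap.BilinForm.baseChange_one_tmul_one_tmul, hv, hv', map_zero]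

lemma piV_eq_comap_baseChange_quotLift (hsymm : ∀ x y, b x y = b y x)
    (hv : b v v = 0) (hv' : b v' v' = 0) (hv'v : b v' v ≠ 0) {S : Submodule k (k ⊗[ZMod p] Vt)}
    (hS : ∀ z ∈ S, b.baseChange k ((1 : k) ⊗ₜ[ZMod p] v') z = 0) :
    piV k b v hv S = S.comap ((quotLift b hv (b v') hv'v).baseChange k) := by
  have hι : Function.Injective (iotaPerp k b v) :=
    Module.Flat.lTensor_preserves_injective_linearMap _ (perp b v).injective_subtype
  have hlift : ∀ x, iotaPerp k b v ((perpLift b hv (b v') hv'v).baseChange k x) =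
      (quotLift b hv (b v') hv'v).baseChange k x :=
    LinearMap.congr_fun (iotaPerp_comp_baseChange_perpLift k hv _ hv'v)
  have hsec : ∀ x, qMap k b v hv ((perpLift b hv (b v') hv'v).baseChange k x) = x :=
    LinearMap.congr_fun (qMap_comp_baseChange_perpLift k hv _ hv'v)
  ext y
  constructor
  · rintro ⟨z, hz, rfl⟩
    obtain ⟨w, hw⟩ := ker_inf_ker_le_range_baseChange_quotLift k hsymm hv hv' hv'v
      ⟨LinearMap.BilinForm.baseChange_one_tmul_baseChange_eq_zero b (fun m => m.2) z, hS _ hz⟩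
    obtain rfl : (perpLift b hv (b v') hv'v).baseChange k w = z := hι ((hlift w).trans hw)
    rw [Submodule.mem_comap, hsec, ← hlift]
    exact hz
  · intro hy
    refine ⟨(perpLift b hv (b v') hv'v).baseChange k y, ?_, hsec y⟩
    show iotaPerp k b v _ ∈ S
    rwa [hlift]

lemma map_piV_sup_span_eq (hsymm : ∀ x y, b x y = b y x)
    (hv : b v v = 0) (hv' : b v' v' = 0) (hv'v : b v' v ≠ 0) {S : Submodule k (k ⊗[ZMod p] Vt)}
    (hS : ∀ x ∈ S, ∀ y ∈ S, b.baseChange k x y = 0) (hv'S : (1 : k) ⊗ₜ[ZMod p] v' ∈ S) :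
    (piV k b v hv S).map ((quotLift b hv (b v') hv'v).baseChange k) ⊔
      Submodule.span k {(1 : k) ⊗ₜ[ZMod p] v'} = S := by
  rw [piV_eq_comap_baseChange_quotLift k hsymm hv hv' hv'v (hS _ hv'S)]
  have htrace : (S.comap ((quotLift b hv (b v') hv'v).baseChange k)).map
      ((quotLift b hv (b v') hv'v).baseChange k) =
        S ⊓ LinearMap.ker (b.baseChange k ((1 : k) ⊗ₜ[ZMod p] v)) := by
    rw [Submodule.map_comap_eq]
    refine le_antisymm (fun z ⟨hr, hz⟩ => ⟨hz, (range_baseChange_quotLift_le k hv hv'v hr).1⟩)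
      fun z ⟨hz, hvz⟩ => ⟨ker_inf_ker_le_range_baseChange_quotLift k hsymm hv hv' hv'v
        ⟨hvz, hS _ hv'S z hz⟩, hz⟩
  rw [htrace]
  exact Submodule.inf_ker_sup_span_singleton_eq hv'S
    (b.baseChange_one_tmul_one_tmul_ne_zero (hsymm v' v ▸ hv'v))

end BaseChangeQuotLift

theorem stmt5_general (p : ℕ) [Fact p.Prime]
    (k : Type*) [Field k] [IsAlgClosed k] [CharP k p] [Algebra (ZMod p) k]
    (σ0 : ℕ)
    (Vt : Type*) [AddCommGroup Vt] [Module (ZMod p) Vt]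
    (b : LinearMap.BilinForm (ZMod p) Vt)
    (hsymm : ∀ x y, b x y = b y x)
    (hdim : Module.finrank (ZMod p) Vt = 2 * σ0 + 2)
    (v : Vt) (hv : b v v = 0)
    (K : Submodule k (k ⊗[ZMod p] (Vquot b v hv)))
    (hK : IsCharSub σ0 (bQuot b v hsymm hv) K)
    (v' : Vt) (hv' : b v' v' = 0) (hvv' : b v v' ≠ 0) :
    ∃! Kt : Submodule k (k ⊗[ZMod p] Vt),
      IsCharSub (σ0 + 1) b Kt ∧ (1 : k) ⊗ₜ[ZMod p] v ∉ Kt ∧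
        piV k b v hv Kt = K ∧ (1 : k) ⊗ₜ[ZMod p] v' ∈ Kt := by
  have : Module.Finite (ZMod p) Vt := Module.finite_of_finrank_pos (by omega)
  have hv'v : b v' v ≠ 0 := hsymm v v' ▸ hvv'
  have hvv'k := b.baseChange_one_tmul_one_tmul_ne_zero (L := k) hvv'
  set s := (quotLift b hv (b v') hv'v).baseChange k
  have hs : Function.Injective s :=
    Module.Flat.lTensor_preserves_injective_linearMap _ (quotLift_injective b hv _ hv'v)
  have hsv : ∀ u, b.baseChange k ((1 : k) ⊗ₜ[ZMod p] v) (s u) = 0 := fun u =>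
    (range_baseChange_quotLift_le k hv hv'v ⟨u, rfl⟩).1
  have hKt := hK.map_baseChange_sup_span hsymm hs (compl₁₂_quotLift b hv _ hv'v hsymm) hv'
    (apply_quotLift b hv _ hv'v) fun ⟨u, hu⟩ => hvv'k (hu ▸ hsv u)
  have hv'Kt : (1 : k) ⊗ₜ[ZMod p] v' ∈ K.map s ⊔ Submodule.span k {(1 : k) ⊗ₜ[ZMod p] v'} :=
    Submodule.mem_sup_right (Submodule.mem_span_singleton_self _)
  refine ⟨_, ⟨hKt, fun hvKt => hvv'k (hKt.1 _ hvKt _ hv'Kt), ?_, hv'Kt⟩, ?_⟩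
  · rw [piV_eq_comap_baseChange_quotLift k hsymm hv hv' hv'v (hKt.1 _ hv'Kt),
      Submodule.comap_map_sup_span_singleton_eq hs hsv hvv'k]
  · rintro S ⟨hS, -, rfl, hv'S⟩
    exact (map_piV_sup_span_eq k hsymm hv hv' hv'v hS.1 hv'S).symm

theorem stmt5 (p : ℕ) [Fact p.Prime] (hp : p ≠ 2)
    (k : Type*) [Field k] [IsAlgClosed k] [CharP k p] [Algebra (ZMod p) k]
    (σ0 : ℕ)
    (Vt : Type*) [AddCommGroup Vt] [Module (ZMod p) Vt]
    (b : LinearMap.BilinForm (ZMod p) Vt)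
    (hsymm : ∀ x y, b x y = b y x) (hnd : Nondeg b) (hnn : NonNeutral b)
    (hdim : Module.finrank (ZMod p) Vt = 2 * σ0 + 2)
    (v : Vt) (hv0 : v ≠ 0) (hv : b v v = 0)
    (K : Submodule k (k ⊗[ZMod p] (Vquot b v hv)))
    (hK : IsCharSub σ0 (bQuot b v hsymm hv) K)
    (v' : Vt) (hv'0 : v' ≠ 0) (hv' : b v' v' = 0) (hvv' : b v v' ≠ 0) :
    ∃! Kt : Submodule k (k ⊗[ZMod p] Vt),
      IsCharSub (σ0 + 1) b Kt ∧ (1 : k) ⊗ₜ[ZMod p] v ∉ Kt ∧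
        piV k b v hv Kt = K ∧ (1 : k) ⊗ₜ[ZMod p] v' ∈ Kt :=
  stmt5_general p k σ0 Vt b hsymm hdim v hv K hK v' hv' hvv'
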